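/- Let n ≥ 2 and i ≥ 0 be integers and let l be any integer. For every s > 0, the function w(s) = cosh(s)^i · sinh(s)^l (integer powers) satisfies w''(s) + (n−1)·coth(s)·w'(s) = (i+l+n−1)(i+l)·cosh(s)^i·sinh(s)^l − i(i−1)·cosh(s)^{i−2}·sinh(s)^l + l(l+n−2)·cosh(s)^i·sinh(s)^{l−2}. -/

import Mathlib

/-!
Differentiating `cosh ^ i * sinh ^ l` gives a combination of `cosh ^ (i ± 1) * sinh ^ (l ∓ 1)`,
so after two differentiations and multiplication by `coth` every term is `cosh ^ i * sinh ^ l`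
times a Laurent monomial in `cosh` and `sinh`. Factoring out `cosh ^ i * sinh ^ l`, the claim
becomes a polynomial identity in `cosh s` and `sinh s` that holds modulo `cosh² = sinh² + 1`.
-/

open Real Topology

namespace Real

theorem hasDerivAt_cosh_zpow_mul_sinh_zpow (i l : ℤ) {t : ℝ} (ht : t ≠ 0) :
    HasDerivAt (fun t => cosh t ^ i * sinh t ^ l)
      (i * cosh t ^ (i - 1) * sinh t ^ (l + 1) + l * cosh t ^ (i + 1) * sinh t ^ (l - 1)) t := by
  have hc : cosh t ≠ 0 := (cosh_pos t).ne'
  have hs : sinh t ≠ 0 := sinh_ne_zero.2 ht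
  refine (((hasDerivAt_zpow i _ (Or.inl hc)).comp t (hasDerivAt_cosh t)).mul
    ((hasDerivAt_zpow l _ (Or.inl hs)).comp t (hasDerivAt_sinh t))).congr_deriv ?_
  rw [Function.comp_apply, Function.comp_apply, zpow_add_one₀ hs, zpow_add_one₀ hc]
  ring

theorem deriv_cosh_zpow_mul_sinh_zpow_eventuallyEq (i l : ℤ) {s : ℝ} (hs : s ≠ 0) :
    deriv (fun t => cosh t ^ i * sinh t ^ l) =ᶠ[𝓝 s]
      fun t => i * (cosh t ^ (i - 1) * sinh t ^ (l + 1))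
        + l * (cosh t ^ (i + 1) * sinh t ^ (l - 1)) := by
  filter_upwards [isOpen_ne.mem_nhds hs] with t ht
  rw [(hasDerivAt_cosh_zpow_mul_sinh_zpow i l ht).deriv]
  ring

theorem hasDerivAt_deriv_cosh_zpow_mul_sinh_zpow (i l : ℤ) {s : ℝ} (hs : s ≠ 0) :
    HasDerivAt (deriv fun t => cosh t ^ i * sinh t ^ l)
      (i * ((i - 1) * cosh s ^ (i - 1 - 1) * sinh s ^ (l + 1 + 1)
          + (l + 1) * cosh s ^ (i - 1 + 1) * sinh s ^ (l + 1 - 1))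
        + l * ((i + 1) * cosh s ^ (i + 1 - 1) * sinh s ^ (l - 1 + 1)
          + (l - 1) * cosh s ^ (i + 1 + 1) * sinh s ^ (l - 1 - 1))) s := by
  refine HasDerivAt.congr_of_eventuallyEq ?_ (deriv_cosh_zpow_mul_sinh_zpow_eventuallyEq i l hs)
  have h₁ := hasDerivAt_cosh_zpow_mul_sinh_zpow (i - 1) (l + 1) hs
  have h₂ := hasDerivAt_cosh_zpow_mul_sinh_zpow (i + 1) (l - 1) hs
  push_cast at h₁ h₂
  exact (h₁.const_mul _).add (h₂.const_mul _)

end Real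

theorem stmt_4 (n i l : ℤ) (s : ℝ) (hs : 0 < s) :
    deriv (deriv (fun t => Real.cosh t ^ i * Real.sinh t ^ l)) s
      + ((n : ℝ) - 1) * (Real.cosh s / Real.sinh s)
        * deriv (fun t => Real.cosh t ^ i * Real.sinh t ^ l) s
    = ((i : ℝ) + (l : ℝ) + (n : ℝ) - 1) * ((i : ℝ) + (l : ℝ))
          * Real.cosh s ^ i * Real.sinh s ^ l
      - (i : ℝ) * ((i : ℝ) - 1) * Real.cosh s ^ (i - 2) * Real.sinh s ^ l
      + (l : ℝ) * ((l : ℝ) + (n : ℝ) - 2) * Real.cosh s ^ i * Real.sinh s ^ (l - 2) := by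
  have hc : cosh s ≠ 0 := (cosh_pos s).ne'
  have hsh : sinh s ≠ 0 := (sinh_pos_iff.2 hs).ne'
  rw [(hasDerivAt_deriv_cosh_zpow_mul_sinh_zpow i l hs.ne').deriv,
    (hasDerivAt_cosh_zpow_mul_sinh_zpow i l hs.ne').deriv]
  simp only [zpow_add₀ hc, zpow_sub₀ hc, zpow_add₀ hsh, zpow_sub₀ hsh, zpow_ofNat]
  field_simp
  linear_combination ((i : ℝ) * (1 - i) * sinh s ^ 2 + l * (l + n - 2) * cosh s ^ 2) * cosh_sq s
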